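/- Let m, n, d, e be positive integers with d² ∣ m and e² ∣ m·n. If there exists an injective group homomorphism from (ZMod d) × (ZMod (m/d)) into (ZMod e) × (ZMod (m·n/e)), then d divides e, and moreover m divides d·e or e divides d·n. -/

import Mathlib

/-!
Both claims come from comparing invariants that can only grow along an injective homomorphism.
Since `d ∣ m / d`, the source has `d²` elements killed by `d`, while the target has
`gcd(e, d) · gcd(mn/e, d) ≤ gcd(e, d) · d` of them; hence `gcd(e, d) = d`. Likewise the
exponents are `m / d` and `mn / e`, and `m / d ∣ mn / e` is equivalent to `e ∣ d n`, so it is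
always the second disjunct that holds.
-/

open Function

section Torsion

variable {A B : Type*}

theorem card_subtype_nsmul_eq_zero_le_of_injective [AddMonoid A] [AddMonoid B] [Finite B]
    {f : A →+ B} (hf : Injective f) (k : ℕ) :
    Nat.card {a : A // k • a = 0} ≤ Nat.card {b : B // k • b = 0} :=
  Nat.card_le_card_of_injective _ <|
    Subtype.map_injective (fun a ha => by rw [← map_nsmul, ha, map_zero]) hf

theorem card_subtype_nsmul_eq_zero_prod [AddMonoid A] [AddMonoid B] (k : ℕ) :
    Nat.card {p : A × B // k • p = 0} =
      Nat.card {a : A // k • a = 0} * Nat.card {b : B // k • b = 0} := by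
  rw [← Nat.card_prod]
  exact Nat.card_congr <| (Equiv.subtypeEquivRight fun _ => Prod.ext_iff).trans <|
    Equiv.subtypeProdEquivProd (p := fun a : A => k • a = 0) (q := fun b : B => k • b = 0)

end Torsion

theorem ZMod.card_subtype_nsmul_eq_zero (N k : ℕ) [NeZero N] :
    Nat.card {x : ZMod N // k • x = 0} = N.gcd k := by
  simpa using IsAddCyclic.card_nsmulAddMonoidHom_ker (ZMod N) k

theorem ZMod.dvd_of_injective_prod {a b c e k : ℕ} [NeZero a] [NeZero b] [NeZero c] [NeZero e]
    {f : ZMod a × ZMod b →+ ZMod c × ZMod e} (hf : Injective f) (ha : k ∣ a) (hb : k ∣ b) :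
    k ∣ c ∧ k ∣ e := by
  have hk : 0 < k := Nat.pos_of_dvd_of_pos ha (Nat.pos_of_neZero a)
  have hcard := card_subtype_nsmul_eq_zero_le_of_injective hf k
  simp only [card_subtype_nsmul_eq_zero_prod, ZMod.card_subtype_nsmul_eq_zero,
    Nat.gcd_eq_right ha, Nat.gcd_eq_right hb] at hcard
  have hc : c.gcd k ≤ k := Nat.le_of_dvd hk (Nat.gcd_dvd_right c k)
  have he : e.gcd k ≤ k := Nat.le_of_dvd hk (Nat.gcd_dvd_right e k)
  rw [← Nat.gcd_eq_right_iff_dvd, ← Nat.gcd_eq_right_iff_dvd]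
  constructor <;> nlinarith

theorem ZMod.exponent_prod_of_dvd {a b : ℕ} (h : a ∣ b) :
    AddMonoid.exponent (ZMod a × ZMod b) = b := by
  rw [AddMonoid.exponent_prod, ZMod.exponent, ZMod.exponent, lcm_eq_nat_lcm, Nat.lcm_eq_right h]

theorem Nat.dvd_mul_of_div_dvd_div {m n d e : ℕ} (hm : 0 < m) (hd : d ∣ m) (he : e ∣ m * n)
    (h : m / d ∣ m * n / e) : e ∣ d * n := by
  obtain ⟨q, hq⟩ := h
  have hmd : 0 < m / d := Nat.div_pos (Nat.le_of_dvd hm hd) (Nat.pos_of_dvd_of_pos hd hm)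
  refine ⟨q, Nat.eq_of_mul_eq_mul_left hmd ?_⟩
  calc m / d * (d * n) = m * n := by rw [← mul_assoc, Nat.div_mul_cancel hd]
    _ = e * (m / d * q) := by rw [← hq, Nat.mul_div_cancel' he]
    _ = m / d * (e * q) := by ring

theorem dvd_of_injective_hom (m n d e : ℕ) (hm : 0 < m) (hn : 0 < n)
    (hd : 0 < d) (he : 0 < e) (hdm : d ^ 2 ∣ m) (hem : e ^ 2 ∣ m * n)
    (h : ∃ f : (ZMod d × ZMod (m / d)) →+ (ZMod e × ZMod (m * n / e)),
      Function.Injective f) :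
    d ∣ e ∧ (m ∣ d * e ∨ e ∣ d * n) := by
  obtain ⟨f, hf⟩ := h
  have hdm' : d ∣ m := (dvd_pow_self d two_ne_zero).trans hdm
  have hem' : e ∣ m * n := (dvd_pow_self e two_ne_zero).trans hem
  have hd_dvd : d ∣ m / d := Nat.dvd_div_of_mul_dvd (sq d ▸ hdm)
  have he_dvd : e ∣ m * n / e := Nat.dvd_div_of_mul_dvd (sq e ▸ hem)
  have : NeZero d := ⟨hd.ne'⟩
  have : NeZero e := ⟨he.ne'⟩
  have : NeZero (m / d) := ⟨(Nat.div_pos (Nat.le_of_dvd hm hdm') hd).ne'⟩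
  have : NeZero (m * n / e) := ⟨(Nat.div_pos (Nat.le_of_dvd (by positivity) hem') he).ne'⟩
  refine ⟨(ZMod.dvd_of_injective_prod hf dvd_rfl hd_dvd).1, Or.inr ?_⟩
  have hexp := AddMonoid.exponent_dvd_of_addMonoidHom f hf
  rw [ZMod.exponent_prod_of_dvd hd_dvd, ZMod.exponent_prod_of_dvd he_dvd] at hexp
  exact Nat.dvd_mul_of_div_dvd_div hm hdm' hem' hexp
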